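/- arXiv:1512.01764 — 8 statements merged into one kernel-verified Lean document; each statement's English description precedes it below -/
import Mathlib

section
/- Let A be a finite set of players, let P, Q ⊆ A be disjoint subsets with p = |P| ≥ 1 and q = |Q|, and let V ∈ ℝ. Define the characteristic function ν : 2^A → ℝ by ν(C) = V if P ⊆ C and Q ∩ C = ∅, and ν(C) = 0 otherwise. Then the Shapley value of every player a_i ∈ P equals V / (p · C(p+q, q)), and, if q ≥ 1, the Shapley value of every player a_j ∈ Q equals −V / (q · C(p+q, p)), where C(·,·) denotes the binomial coefficient. -/
/-!
The marginal contribution of `i ∈ P` to a coalition `C ∌ i` is `V` exactly when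
`P \ {i} ⊆ C ⊆ (Q ∪ {i})ᶜ`, and that of `j ∈ Q` is `-V` exactly when `P ⊆ C ⊆ Qᶜ`. So each
Shapley value is `±V` times the total Shapley weight `|C|! (n - |C| - 1)! / n!` of an interval
`R ⊆ C ⊆ U` of coalitions. With `s = n - 1 - |U|` this total is `|R|! s! / (|R| + s + 1)!`,
the probability that in a random order the player comes after all of `R` and before the `s`
players outside `U`. The players of `U \ R` do not affect it: removing one of them splits the
sum into the coalitions containing it and those avoiding it, and the two closed forms add up
as in Pascal's rule.
-/

open Finset

/-- The Shapley value of player `i` in the coalitional game with characteristic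
function `ν` on the finite player set `α`. -/
noncomputable def shapley {α : Type*} [Fintype α] [DecidableEq α]
    (ν : Finset α → ℝ) (i : α) : ℝ :=
  ∑ C ∈ (Finset.univ.erase i).powerset,
    ((C.card.factorial * (Fintype.card α - C.card - 1).factorial : ℝ) /
        ((Fintype.card α).factorial : ℝ)) * (ν (insert i C) - ν C)

open Nat

theorem sum_powerset_factorial_mul_factorial {α : Type*} [DecidableEq α] (T : Finset α)
    (a b : ℕ) :
    ∑ D ∈ T.powerset, ((a + #D)! * (b + #(T \ D))! : ℝ)
      = a ! * b ! * (a + b + 1 + #T)! / (a + b + 1)! := by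
  induction T using Finset.induction_on generalizing a b with
  | empty => simp [field]
  | insert y T hyT ih =>
    have without_y : ∀ D ∈ T.powerset, ((a + #D)! * (b + #(insert y T \ D))! : ℝ)
        = (a + #D)! * (b + 1 + #(T \ D))! := by
      intro D hD
      have hyD : y ∉ D := fun h => hyT (mem_powerset.mp hD h)
      rw [insert_sdiff_of_notMem _ hyD, card_insert_of_notMem (fun h => hyT (mem_sdiff.mp h).1),
        add_comm _ 1, ← add_assoc]
    have with_y : ∀ D ∈ T.powerset,
        ((a + #(insert y D))! * (b + #(insert y T \ insert y D))! : ℝ)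
          = (a + 1 + #D)! * (b + #(T \ D))! := by
      intro D hD
      have hyD : y ∉ D := fun h => hyT (mem_powerset.mp hD h)
      rw [insert_sdiff_insert, sdiff_insert_of_notMem hyT, card_insert_of_notMem hyD,
        add_comm _ 1, ← add_assoc]
    rw [sum_powerset_insert hyT, sum_congr rfl without_y, sum_congr rfl with_y, ih, ih,
      card_insert_of_notMem hyT, show a + (b + 1) + 1 = a + b + 1 + 1 by ring,
      show a + 1 + b + 1 = a + b + 1 + 1 by ring,
      show a + b + 1 + 1 + #T = a + b + 1 + (#T + 1) by ring]
    simp only [factorial_succ, cast_mul]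
    field_simp
    push_cast
    ring

theorem sum_Icc_factorial_mul_factorial_div {α : Type*} [DecidableEq α] {R U : Finset α}
    (hRU : R ⊆ U) {n s : ℕ} (hn : #U + s + 1 = n) :
    ∑ C ∈ Icc R U, ((#C)! * (n - #C - 1)! : ℝ) / n ! = (#R)! * s ! / (#R + s + 1)! := by
  have hR_le := card_le_card hRU
  have hdisj : ∀ D ∈ (U \ R).powerset, Disjoint R D := fun D hD =>
    disjoint_of_subset_right (mem_powerset.mp hD) disjoint_sdiff
  have hterm : ∀ D ∈ (U \ R).powerset, ((#(R ∪ D))! * (n - #(R ∪ D) - 1)! : ℝ)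
      = (#R + #D)! * (s + #((U \ R) \ D))! := by
    intro D hD
    have hDU := mem_powerset.mp hD
    have hD_le : #D ≤ #U - #R := card_sdiff_of_subset hRU ▸ card_le_card hDU
    rw [card_union_of_disjoint (hdisj D hD), card_sdiff_of_subset hDU,
      card_sdiff_of_subset hRU, show n - (#R + #D) - 1 = s + (#U - #R - #D) by omega]
  rw [Icc_eq_image_powerset hRU, sum_image, ← sum_div, sum_congr rfl hterm,
    sum_powerset_factorial_mul_factorial, card_sdiff_of_subset hRU,
    show #R + s + 1 + (#U - #R) = n by omega]
  · field_simp
  · intro D₁ hD₁ D₂ hD₂ h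
    rw [← union_sdiff_cancel_left (hdisj D₁ hD₁), ← union_sdiff_cancel_left (hdisj D₂ hD₂)]
    exact congrArg (· \ R) h

theorem factorial_pred_mul_factorial_div (a b : ℕ) (ha : a ≠ 0) :
    ((a - 1)! * b ! : ℝ) / (a - 1 + b + 1)! = 1 / (a * (a + b).choose b) := by
  have h₁ : (a + b).choose b * a ! * b ! = (a + b)! := add_choose_mul_factorial_mul_factorial a b
  have h₂ : a * (a - 1)! = a ! := mul_factorial_pred ha
  rw [show a - 1 + b + 1 = a + b by omega, ← h₁, ← h₂]
  push_cast
  field_simp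

section Game

variable {α : Type*} [Fintype α] [DecidableEq α]

theorem shapley_eq_mul_sum_Icc {ν : Finset α → ℝ} {i : α} {R U : Finset α} {c : ℝ} (hiU : i ∉ U)
    (hν : ∀ C, i ∉ C → ν (insert i C) - ν C = if R ⊆ C ∧ C ⊆ U then c else 0) :
    shapley ν i = c * ∑ C ∈ Icc R U,
      ((#C)! * (Fintype.card α - #C - 1)! : ℝ) / (Fintype.card α)! := by
  have hIcc : Icc R U ⊆ (univ.erase i).powerset := fun C hC =>
    mem_powerset.mpr <| (mem_Icc.mp hC).2.trans fun x hx =>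
      mem_erase.mpr ⟨fun h => hiU (h ▸ hx), mem_univ x⟩
  rw [shapley, mul_sum, ← inter_eq_right.mpr hIcc, ← sum_ite_mem]
  refine sum_congr rfl fun C hC => ?_
  rw [hν C fun h => by simpa using mem_powerset.mp hC h]
  simp only [mem_Icc]
  split_ifs <;> ring

variable {P Q : Finset α} {V : ℝ} {ν : Finset α → ℝ}

theorem insert_sub_eq_ite_of_mem_left
    (hν : ∀ C, ν C = if P ⊆ C ∧ Disjoint Q C then V else 0)
    {i : α} (hiP : i ∈ P) (hiQ : i ∉ Q) (C : Finset α) (hiC : i ∉ C) :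
    ν (insert i C) - ν C = if P.erase i ⊆ C ∧ C ⊆ (insert i Q)ᶜ then V else 0 := by
  have hC : ¬(P ⊆ C ∧ Disjoint Q C) := fun h => hiC (h.1 hiP)
  have hiff : P ⊆ insert i C ∧ Disjoint Q (insert i C) ↔
      P.erase i ⊆ C ∧ C ⊆ (insert i Q)ᶜ := by
    rw [subset_insert_iff, subset_compl_iff_disjoint_right, disjoint_insert_right,
      disjoint_insert_right, disjoint_comm]
    simp [hiQ, hiC]
  rw [hν, hν, if_neg hC, sub_zero]
  exact if_congr hiff rfl rfl

theorem insert_sub_eq_ite_of_mem_right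
    (hν : ∀ C, ν C = if P ⊆ C ∧ Disjoint Q C then V else 0)
    {j : α} (hjQ : j ∈ Q) (C : Finset α) :
    ν (insert j C) - ν C = if P ⊆ C ∧ C ⊆ Qᶜ then -V else 0 := by
  have hjC : ¬(P ⊆ insert j C ∧ Disjoint Q (insert j C)) := fun h =>
    disjoint_left.mp h.2 hjQ (mem_insert_self j C)
  rw [hν, hν, if_neg hjC, zero_sub, apply_ite Neg.neg, neg_zero]
  exact if_congr (and_congr_right' (subset_compl_iff_disjoint_right.trans disjoint_comm).symm)
    rfl rfl

end Game

/-- For the MC-net rule game `ν(C) = V` if `P ⊆ C` and `Q ∩ C = ∅` (else `0`), the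
Shapley value of every player in `P` is `V / (p·C(p+q,q))` and, when `q ≥ 1`, the
Shapley value of every player in `Q` is `−V / (q·C(p+q,p))`. -/
theorem mcnet_rule_shapley {α : Type*} [Fintype α] [DecidableEq α]
    (P Q : Finset α) (hPQ : Disjoint P Q) (hP : 1 ≤ P.card) (V : ℝ)
    (ν : Finset α → ℝ)
    (hν : ∀ C : Finset α, ν C = if P ⊆ C ∧ Disjoint Q C then V else 0) :
    (∀ i ∈ P, shapley ν i
        = V / ((P.card : ℝ) * (Nat.choose (P.card + Q.card) Q.card : ℝ))) ∧
    (1 ≤ Q.card → ∀ j ∈ Q, shapley ν j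
        = -V / ((Q.card : ℝ) * (Nat.choose (P.card + Q.card) P.card : ℝ))) := by
  have hPQ_card : #P + #Q ≤ Fintype.card α := card_union_of_disjoint hPQ ▸ card_le_univ _
  constructor
  · intro i hi
    have hiQ : i ∉ Q := disjoint_left.mp hPQ hi
    have hRU : P.erase i ⊆ (insert i Q)ᶜ := subset_compl_iff_disjoint_right.mpr <|
      disjoint_insert_right.mpr ⟨notMem_erase i P, disjoint_of_subset_left (erase_subset i P) hPQ⟩
    have hcard : #(insert i Q)ᶜ + #Q + 1 = Fintype.card α := by
      rw [card_compl, card_insert_of_notMem hiQ]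
      omega
    rw [shapley_eq_mul_sum_Icc (notMem_compl.mpr (mem_insert_self i Q))
        (insert_sub_eq_ite_of_mem_left hν hi hiQ),
      sum_Icc_factorial_mul_factorial_div hRU hcard, card_erase_of_mem hi,
      factorial_pred_mul_factorial_div _ _ (by omega), mul_one_div]
  · intro hQ j hj
    have hcard : #Qᶜ + (#Q - 1) + 1 = Fintype.card α := by
      rw [card_compl]
      omega
    rw [shapley_eq_mul_sum_Icc (notMem_compl.mpr hj)
        (fun C _ => insert_sub_eq_ite_of_mem_right hν hj C),
      sum_Icc_factorial_mul_factorial_div (subset_compl_iff_disjoint_right.mpr hPQ) hcard,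
      mul_comm ((#P)! : ℝ), add_comm #P (#Q - 1), factorial_pred_mul_factorial_div _ _ (by omega),
      add_comm #Q #P, mul_one_div]
end

section
/- Let G = (V, E) be a finite simple undirected graph and define ν₁ : 2^V → ℝ by ν₁(C) = |C ∪ N(C)| (the number of vertices that are in C or adjacent to C), so ν₁(∅) = 0. Then for every v ∈ V, the Shapley value of v in the game (V, ν₁) equals Σ_{u ∈ N(v) ∪ {v}} 1 / (1 + deg(u)). -/
open Finset

/-!
The coverage game is the sum, over all vertices `u`, of the games "the coalition meets the
closed neighbourhood `N[u]`". In such a game only the members of `N[u]` have nonzero marginal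
contributions, and each of them gets `1 / |N[u]| = 1 / (1 + deg u)`: the weight of the
coalitions avoiding `N[u]` telescopes to `1 / |N[u]|`. Additivity of the Shapley value and
`v ∈ N[u] ↔ u ∈ N[v]` give the formula.
-/

open scoped Nat

noncomputable def shapleyWeight (n k : ℕ) : ℝ := (k ! * (n - k - 1)! : ℝ) / n !

theorem sum_range_choose_mul_shapleyWeight (m : ℕ) {s : ℕ} (hs : 0 < s) :
    ∑ k ∈ range (m + 1), (m.choose k : ℝ) * shapleyWeight (m + s) k = 1 / s := by
  -- `b k` is the probability that the first `k` players of a random order all lie in a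
  -- fixed `m`-set, divided by `s`
  set b : ℕ → ℝ := fun k => (m.descFactorial k * (m + s - k)! : ℝ) / (s * (m + s)!)
  have telescope : ∀ k ∈ range (m + 1),
      (m.choose k : ℝ) * shapleyWeight (m + s) k = b k - b (k + 1) := by
    intro k hk
    have hkm : k ≤ m := Nat.lt_succ_iff.mp (mem_range.mp hk)
    have hfact : (m + s - k)! = (m + s - k) * (m + s - k - 1)! := by
      rw [← Nat.mul_factorial_pred (by omega)]
    have hsub : ((m + s - k : ℕ) : ℝ) = (m - k : ℕ) + s := by
      rw [show m + s - k = (m - k) + s by omega]; push_cast; ring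
    simp only [b, shapleyWeight, Nat.descFactorial_succ m k,
      Nat.descFactorial_eq_factorial_mul_choose m k, hfact,
      show m + s - (k + 1) = m + s - k - 1 by omega]
    push_cast [hsub]
    field_simp
    ring
  rw [sum_congr rfl telescope, sum_range_sub']
  have hb0 : b 0 = 1 / s := by
    simp only [b, Nat.descFactorial_zero, Nat.sub_zero, Nat.cast_one]
    field_simp
  have hbm : b (m + 1) = 0 := by
    simp [b]
  rw [hb0, hbm, sub_zero]

section Shapley

variable {α : Type*} [Fintype α] [DecidableEq α]

theorem shapley_eq_sum_shapleyWeight (ν : Finset α → ℝ) (i : α) :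
    shapley ν i = ∑ C ∈ (univ.erase i).powerset,
      shapleyWeight (Fintype.card α) C.card * (ν (insert i C) - ν C) :=
  rfl

theorem shapley_sum {ι : Type*} (s : Finset ι) (ν : ι → Finset α → ℝ) (i : α) :
    shapley (fun C => ∑ j ∈ s, ν j C) i = ∑ j ∈ s, shapley (ν j) i := by
  simp only [shapley, ← sum_sub_distrib, mul_sum]
  exact sum_comm

def hittingGame (S C : Finset α) : ℝ := if Disjoint S C then 0 else 1

theorem shapley_hittingGame_of_notMem {S : Finset α} {i : α} (hi : i ∉ S) :
    shapley (hittingGame S) i = 0 := by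
  refine sum_eq_zero fun C _ => ?_
  have hC : hittingGame S (insert i C) = hittingGame S C := by
    simp [hittingGame, disjoint_insert_right, hi]
  rw [hC, sub_self, mul_zero]

theorem shapley_hittingGame_of_mem {S : Finset α} {i : α} (hi : i ∈ S) :
    shapley (hittingGame S) i = 1 / S.card := by
  have marginal : ∀ C : Finset α, hittingGame S (insert i C) - hittingGame S C =
      if Disjoint S C then 1 else 0 := by
    intro C
    simp only [hittingGame, disjoint_insert_right, hi, not_true_eq_false, false_and, if_false]
    split_ifs <;> norm_num
  have free_coalitions : {C ∈ (univ.erase i).powerset | Disjoint S C} = (univ \ S).powerset := by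
    ext C
    simp only [mem_filter, mem_powerset, subset_erase, subset_sdiff, subset_univ, true_and,
      disjoint_comm (a := S)]
    exact ⟨And.right, fun h => ⟨fun hiC => disjoint_left.mp h hiC hi, h⟩⟩
  have hcard : Fintype.card α = (univ \ S).card + S.card := by
    rw [card_univ_sdiff, Nat.sub_add_cancel (card_le_univ S)]
  simp only [shapley_eq_sum_shapleyWeight, marginal, mul_ite, mul_one, mul_zero, ← sum_filter,
    free_coalitions]
  rw [sum_powerset_apply_card, hcard]
  simp only [nsmul_eq_mul]
  exact sum_range_choose_mul_shapleyWeight _ (card_pos.mpr ⟨i, hi⟩)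

theorem shapley_hittingGame (S : Finset α) (i : α) :
    shapley (hittingGame S) i = if i ∈ S then 1 / (S.card : ℝ) else 0 := by
  split_ifs with hi
  · exact shapley_hittingGame_of_mem hi
  · exact shapley_hittingGame_of_notMem hi

end Shapley

namespace SimpleGraph

variable {V : Type*} [Fintype V] [DecidableEq V] (G : SimpleGraph V) [DecidableRel G.Adj]

def closedNeighborFinset (u : V) : Finset V := insert u (G.neighborFinset u)

variable {G}

theorem mem_closedNeighborFinset_comm {u v : V} :
    u ∈ G.closedNeighborFinset v ↔ v ∈ G.closedNeighborFinset u := by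
  simp only [closedNeighborFinset, mem_insert, mem_neighborFinset, eq_comm (a := u), adj_comm]

variable (G)

theorem card_closedNeighborFinset (u : V) : (G.closedNeighborFinset u).card = G.degree u + 1 := by
  rw [closedNeighborFinset, card_insert_of_notMem (G.notMem_neighborFinset_self u),
    card_neighborFinset_eq_degree]

theorem mem_union_biUnion_neighborFinset_iff (C : Finset V) (u : V) :
    u ∈ C ∪ (C.biUnion (fun c => G.neighborFinset c) \ C) ↔
      ¬Disjoint (G.closedNeighborFinset u) C := by
  simp only [union_sdiff_self_eq_union, mem_union, mem_biUnion, mem_neighborFinset,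
    not_disjoint_iff, closedNeighborFinset, mem_insert, exists_eq_or_imp]
  exact or_congr_right ⟨fun ⟨c, hc, hcu⟩ => ⟨c, hcu.symm, hc⟩, fun ⟨c, huc, hc⟩ => ⟨c, hc, huc.symm⟩⟩

theorem card_union_biUnion_neighborFinset (C : Finset V) :
    ((C ∪ (C.biUnion (fun c => G.neighborFinset c) \ C)).card : ℝ) =
      ∑ u, hittingGame (G.closedNeighborFinset u) C := by
  have indicator : ∀ u, hittingGame (G.closedNeighborFinset u) C =
      if u ∈ C ∪ (C.biUnion (fun c => G.neighborFinset c) \ C) then 1 else 0 := by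
    intro u
    simp only [hittingGame, mem_union_biUnion_neighborFinset_iff, ite_not]
  rw [sum_congr rfl fun u _ => indicator u, sum_boole, filter_mem_eq_inter, univ_inter]

end SimpleGraph

/-- For the game where the value of a coalition `C` is the number of nodes in
`C ∪ N(C)`, the Shapley value of a node `v` equals
`Σ_{u ∈ N(v) ∪ {v}} 1/(1 + deg u)`. -/
theorem shapley_degree_game {V : Type*} [Fintype V] [DecidableEq V]
    (G : SimpleGraph V) [DecidableRel G.Adj]
    (ν : Finset V → ℝ)
    (hν : ∀ C : Finset V,
      ν C = ((C ∪ (C.biUnion (fun c => G.neighborFinset c) \ C)).card : ℝ))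
    (v : V) :
    shapley ν v = ∑ u ∈ insert v (G.neighborFinset v), 1 / (1 + (G.degree u : ℝ)) := by
  have hν_sum : ν = fun C => ∑ u, hittingGame (G.closedNeighborFinset u) C :=
    funext fun C => (hν C).trans (G.card_union_biUnion_neighborFinset C)
  rw [hν_sum, shapley_sum]
  calc ∑ u, shapley (hittingGame (G.closedNeighborFinset u)) v
      = ∑ u, if u ∈ G.closedNeighborFinset v then 1 / (1 + (G.degree u : ℝ)) else 0 := by
        refine sum_congr rfl fun u _ => ?_
        rw [shapley_hittingGame, G.card_closedNeighborFinset, Nat.cast_add_one,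
          add_comm (G.degree u : ℝ)]
        simp only [SimpleGraph.mem_closedNeighborFinset_comm (u := v)]
    _ = _ := by rw [sum_ite_mem, univ_inter, SimpleGraph.closedNeighborFinset]
end

section
/- Let G = (V, E) be a finite connected simple undirected graph. Then for every vertex v ∈ V and every subset C ⊆ V, the marginal contribution of v to the group betweenness centrality satisfies c_gb(C ∪ {v}) − c_gb(C) ≤ c_b(v), where c_b(v) is the (ordered-pair) betweenness centrality of v. -/
open Finset
open scoped Classical

variable {V : Type*}

/-- The number of shortest paths from `s` to `t` (walks of length `dist s t`;
for `s = t` this is `1`, the empty walk). -/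
noncomputable def numSP [Fintype V] [DecidableEq V] (G : SimpleGraph V)
    [DecidableRel G.Adj] (s t : V) : ℕ :=
  (G.finsetWalkLength (G.dist s t) s t).card

/-- The number of shortest paths from `s` to `t` passing through `v`
(`0` when `v ∈ {s, t}`). -/
noncomputable def numSPthrough [Fintype V] [DecidableEq V] (G : SimpleGraph V)
    [DecidableRel G.Adj] (s t v : V) : ℕ :=
  if v = s ∨ v = t then 0
  else ((G.finsetWalkLength (G.dist s t) s t).filter (fun p => v ∈ p.support)).card

/-- The number of shortest paths from `s` to `t` passing through at least one vertex
of `C` (`0` when `s ∈ C` or `t ∈ C`). -/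
noncomputable def numSPthroughSet [Fintype V] [DecidableEq V] (G : SimpleGraph V)
    [DecidableRel G.Adj] (s t : V) (C : Finset V) : ℕ :=
  if s ∈ C ∨ t ∈ C then 0
  else ((G.finsetWalkLength (G.dist s t) s t).filter
    (fun p => ∃ c ∈ C, c ∈ p.support)).card

/-- The (ordered-pair) betweenness centrality of a vertex `v`. -/
noncomputable def betw [Fintype V] [DecidableEq V] (G : SimpleGraph V)
    [DecidableRel G.Adj] (v : V) : ℝ :=
  ∑ s ∈ Finset.univ.erase v, ∑ t ∈ Finset.univ.erase v,
    (numSPthrough G s t v : ℝ) / (numSP G s t : ℝ)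

/-- The group betweenness centrality of a set of vertices `C`. -/
noncomputable def groupBetw [Fintype V] [DecidableEq V] (G : SimpleGraph V)
    [DecidableRel G.Adj] (C : Finset V) : ℝ :=
  ∑ s ∈ Finset.univ \ C, ∑ t ∈ Finset.univ \ C,
    (numSPthroughSet G s t C : ℝ) / (numSP G s t : ℝ)

/-! A shortest `s`–`t` path meeting `insert v C` meets `C` or passes through `v`, so the count
for `insert v C` is at most the sum of the two counts; summing over the pairs that avoid
`insert v C`, which occur in both `groupBetw G C` and `betw G v`, gives the bound. -/

theorem Finset.sum_sum_le_sum_sum_of_subset_of_nonneg {ι M : Type*} [AddCommMonoid M]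
    [PartialOrder M] [IsOrderedAddMonoid M] {s t : Finset ι} {f : ι → ι → M} (h : s ⊆ t)
    (hf : ∀ i ∈ t, ∀ j ∈ t, 0 ≤ f i j) :
    ∑ i ∈ s, ∑ j ∈ s, f i j ≤ ∑ i ∈ t, ∑ j ∈ t, f i j := by
  rw [← sum_product', ← sum_product']
  exact sum_le_sum_of_subset_of_nonneg (product_subset_product h h) fun p hp _ =>
    hf _ (mem_product.1 hp).1 _ (mem_product.1 hp).2

theorem numSPthroughSet_insert_le [Fintype V] [DecidableEq V] (G : SimpleGraph V)
    [DecidableRel G.Adj] {s t v : V} {C : Finset V} (hs : s ∉ insert v C)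
    (ht : t ∉ insert v C) :
    numSPthroughSet G s t (insert v C) ≤ numSPthroughSet G s t C + numSPthrough G s t v := by
  rw [mem_insert, not_or] at hs ht
  have hv : ¬(v = s ∨ v = t) := by rintro (rfl | rfl) <;> simp_all
  simp only [numSPthroughSet, numSPthrough, mem_insert, hs, ht, hv, or_self, if_false,
    exists_eq_or_imp, filter_or]
  exact (card_union_le _ _).trans_eq (add_comm _ _)

theorem groupBetw_marginal_le_betw_general [Fintype V] [DecidableEq V]
    (G : SimpleGraph V) [DecidableRel G.Adj]
    (v : V) (C : Finset V) :
    groupBetw G (insert v C) - groupBetw G C ≤ betw G v := by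
  set S := univ \ insert v C
  have hS_C : S ⊆ univ \ C := sdiff_subset_sdiff subset_rfl (subset_insert v C)
  have hS_v : S ⊆ univ.erase v := fun x hx => by
    simp only [S, mem_sdiff, mem_insert, not_or] at hx
    exact mem_erase.2 ⟨hx.2.1, hx.1⟩
  rw [sub_le_iff_le_add']
  calc groupBetw G (insert v C)
      ≤ ∑ s ∈ S, ∑ t ∈ S,
          ((numSPthroughSet G s t C + numSPthrough G s t v : ℕ) : ℝ) / numSP G s t :=
        sum_le_sum fun s hs => sum_le_sum fun t ht => div_le_div_of_nonneg_right
          (by exact_mod_cast numSPthroughSet_insert_le G (mem_sdiff.1 hs).2 (mem_sdiff.1 ht).2)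
          (Nat.cast_nonneg _)
    _ = ∑ s ∈ S, ∑ t ∈ S, (numSPthroughSet G s t C : ℝ) / numSP G s t +
          ∑ s ∈ S, ∑ t ∈ S, (numSPthrough G s t v : ℝ) / numSP G s t := by
        simp only [Nat.cast_add, add_div, sum_add_distrib]
    _ ≤ groupBetw G C + betw G v :=
        add_le_add
          (sum_sum_le_sum_sum_of_subset_of_nonneg hS_C fun _ _ _ _ => by positivity)
          (sum_sum_le_sum_sum_of_subset_of_nonneg hS_v fun _ _ _ _ => by positivity)

/-- The marginal contribution of any vertex `v` to the group betweenness centrality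
of any set `C` is at most the betweenness centrality of `v`. -/
theorem groupBetw_marginal_le_betw [Fintype V] [DecidableEq V]
    (G : SimpleGraph V) [DecidableRel G.Adj] (hG : G.Connected)
    (v : V) (C : Finset V) :
    groupBetw G (insert v C) - groupBetw G C ≤ betw G v :=
  groupBetw_marginal_le_betw_general G v C
end

section
/- Let G = (V, E) be a finite connected simple undirected graph, let s ∈ V, and let f : ℕ → ℝ be an arbitrary function. Define the one-side dependency δ_s(v) = Σ_{t ∈ V} (σ_st(v)/σ_st) · f(dist(s, t) + 1). Then for every v ∈ V with v ≠ s, the recursion δ_s(v) = Σ_{w : {v, w} ∈ E and dist(s, w) = dist(s, v) + 1} (σ_sv / σ_sw) · ( f(dist(s, w) + 1) + δ_s(w) ) holds. -/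
/-!
Cutting a shortest `s`–`t` walk at `u` gives `σ_st(u) = σ_su · N(u, t)`, where `N(u, t)` counts
the walks from `u` to `t` of length `dist s t - dist s u`. Sorting these walks by their first step,
`N(v, t)` is the sum of `N(w, t)` over the neighbours `w` of `v` with `dist s w = dist s v + 1`: any
other neighbour is too close to `s` to reach `t` in the remaining steps. Substituting into the
definition of `δ_s(v)` and exchanging the sums over `t` and `w` yields the recursion, the extra
`f (dist s w + 1)` being the term `t = w`, where `N(w, w) = 1` but `σ_sw(w) = 0`.
-/

open Finset
open scoped Classical

variable {V : Type*}

namespace SimpleGraph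

lemma Walk.append_inj_of_length_eq {G : SimpleGraph V} {u v w : V} {q q' : G.Walk u v}
    {r r' : G.Walk v w} (h : q.append r = q'.append r') (hl : q.length = q'.length) :
    q = q' ∧ r = r' := by
  have hsupp := congrArg Walk.support h
  rw [Walk.support_append, Walk.support_append] at hsupp
  obtain ⟨hq, hr⟩ := List.append_inj hsupp (by simp [hl])
  refine ⟨Walk.ext_support hq, Walk.ext_support ?_⟩
  rw [← r.cons_tail_support, ← r'.cons_tail_support, hr]

variable [Fintype V] [DecidableEq V] {G : SimpleGraph V} [DecidableRel G.Adj]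

lemma card_finsetWalkLength_zero_of_ne {u v : V} (h : u ≠ v) :
    #(G.finsetWalkLength 0 u v) = 0 := by
  simp [finsetWalkLength, h]

lemma card_finsetWalkLength_zero_self (u : V) : #(G.finsetWalkLength 0 u u) = 1 := by
  simp [finsetWalkLength]

lemma card_finsetWalkLength_eq_adjMatrix_pow (n : ℕ) (u v : V) :
    #(G.finsetWalkLength n u v) = (G.adjMatrix ℕ ^ n) u v := by
  rw [adjMatrix_pow_apply_eq_card_walk, card_set_walk_length_eq, Nat.cast_id]

lemma card_finsetWalkLength_succ (n : ℕ) (u v : V) :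
    #(G.finsetWalkLength (n + 1) u v) =
      ∑ w ∈ G.neighborFinset u, #(G.finsetWalkLength n w v) := by
  simp only [card_finsetWalkLength_eq_adjMatrix_pow, pow_succ', adjMatrix_mul_apply]

lemma card_filter_mem_support_finsetWalkLength_dist (s t u : V) :
    #{p ∈ G.finsetWalkLength (G.dist s t) s t | u ∈ p.support} =
      #(G.finsetWalkLength (G.dist s u) s u) *
        #(G.finsetWalkLength (G.dist s t - G.dist s u) u t) := by
  rw [← card_product]
  refine (card_bij (fun qr _ => qr.1.append qr.2) ?_ ?_ ?_).symm
  · rintro ⟨q, r⟩ hqr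
    simp only [mem_product, mem_finsetWalkLength_iff] at hqr
    obtain ⟨hq, hr⟩ := hqr
    have hle : G.dist s u ≤ G.dist s t := by
      by_contra! hlt
      have hut : u = t := r.eq_of_length_eq_zero (by omega)
      subst hut
      omega
    simp only [mem_filter, mem_finsetWalkLength_iff, Walk.length_append, hq, hr,
      Walk.mem_support_append_iff, Walk.end_mem_support, true_or, and_true]
    omega
  · rintro ⟨q, r⟩ hqr ⟨q', r'⟩ hqr' h
    simp only [mem_product, mem_finsetWalkLength_iff] at hqr hqr'
    obtain ⟨rfl, rfl⟩ := Walk.append_inj_of_length_eq h (hqr.1.trans hqr'.1.symm)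
    rfl
  · intro p hp
    obtain ⟨hp, hu⟩ := mem_filter.mp hp
    rw [mem_finsetWalkLength_iff] at hp
    refine ⟨(p.takeUntil u hu, p.dropUntil u hu), ?_, p.take_spec hu⟩
    have hlen := congrArg Walk.length (p.take_spec hu)
    rw [Walk.length_append] at hlen
    have h₁ := dist_le (p.takeUntil u hu)
    have h₂ := dist_le (p.dropUntil u hu)
    have h₃ := (p.takeUntil u hu).reachable.dist_triangle_left t
    simp only [mem_product, mem_finsetWalkLength_iff]
    omega

lemma card_finsetWalkLength_dist_sub_eq_sum {s v t : V} (hvt : v ≠ t) :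
    #(G.finsetWalkLength (G.dist s t - G.dist s v) v t) =
      ∑ w ∈ univ.filter (fun w => G.Adj v w ∧ G.dist s w = G.dist s v + 1),
        #(G.finsetWalkLength (G.dist s t - G.dist s w) w t) := by
  rcases le_or_gt (G.dist s t) (G.dist s v) with hle | hlt
  · rw [Nat.sub_eq_zero_of_le hle, card_finsetWalkLength_zero_of_ne hvt]
    refine (sum_eq_zero fun w hw => ?_).symm
    have hdw := (mem_filter.mp hw).2.2
    rw [Nat.sub_eq_zero_of_le (by omega)]
    exact card_finsetWalkLength_zero_of_ne (by rintro rfl; omega)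
  obtain ⟨m, hm⟩ : ∃ m, G.dist s t - G.dist s v = m + 1 :=
    ⟨G.dist s t - G.dist s v - 1, by omega⟩
  have hnext : ∀ w, G.Adj v w → #(G.finsetWalkLength m w t) ≠ 0 →
      G.dist s w = G.dist s v + 1 := by
    intro w hadj hne
    obtain ⟨p, hp⟩ := card_ne_zero.mp hne
    rw [mem_finsetWalkLength_iff] at hp
    have h₁ := p.reachable.dist_triangle_right s
    have h₂ := hadj.reachable.dist_triangle_right s
    have h₃ := dist_le p
    rw [dist_eq_one_iff_adj.mpr hadj] at h₂
    omega
  rw [hm, card_finsetWalkLength_succ]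
  calc ∑ w ∈ G.neighborFinset v, #(G.finsetWalkLength m w t)
      = ∑ w ∈ univ.filter (fun w => G.Adj v w ∧ G.dist s w = G.dist s v + 1),
          #(G.finsetWalkLength m w t) := by
        refine (sum_subset (fun w hw => ?_) fun w hw hwW => ?_).symm
        · simpa using (mem_filter.mp hw).2.1
        · rw [mem_neighborFinset] at hw
          by_contra hne
          exact hwW (mem_filter.mpr ⟨mem_univ w, hw, hnext w hw hne⟩)
    _ = _ := sum_congr rfl fun w hw => by rw [(mem_filter.mp hw).2.2]; congr 2; omega

end SimpleGraph

open SimpleGraph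

section

variable [Fintype V] [DecidableEq V] {G : SimpleGraph V} [DecidableRel G.Adj] {s : V}

lemma numSP_pos {t : V} (h : G.Reachable s t) : 0 < numSP G s t := by
  obtain ⟨p, hp⟩ := h.exists_walk_length_eq_dist
  exact card_pos.mpr ⟨p, mem_finsetWalkLength_iff.mpr hp⟩

lemma numSPthrough_eq_numSP_mul {t u : V} (hus : u ≠ s) (hut : u ≠ t) :
    numSPthrough G s t u = numSP G s u * #(G.finsetWalkLength (G.dist s t - G.dist s u) u t) := by
  rw [numSPthrough, if_neg (by tauto)]
  exact card_filter_mem_support_finsetWalkLength_dist s t u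

lemma numSPthrough_eq_numSP_mul_sum {v : V} (hvs : v ≠ s) (t : V) :
    numSPthrough G s t v = numSP G s v *
      ∑ w ∈ univ.filter (fun w => G.Adj v w ∧ G.dist s w = G.dist s v + 1),
        #(G.finsetWalkLength (G.dist s t - G.dist s w) w t) := by
  by_cases hvt : v = t
  · subst hvt
    rw [numSPthrough, if_pos (Or.inr rfl), sum_eq_zero, mul_zero]
    intro w hw
    obtain ⟨-, hadj, hdw⟩ := mem_filter.mp hw
    rw [hdw, Nat.sub_eq_zero_of_le (by omega)]
    exact card_finsetWalkLength_zero_of_ne hadj.ne'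
  · rw [numSPthrough_eq_numSP_mul hvs hvt, card_finsetWalkLength_dist_sub_eq_sum hvt]

variable (G s) in
noncomputable def oneSideDependency (f : ℕ → ℝ) (v : V) : ℝ :=
  ∑ t : V, ((numSPthrough G s t v : ℝ) / (numSP G s t : ℝ)) * f (G.dist s t + 1)

lemma add_oneSideDependency_eq_sum {w : V} (hws : w ≠ s) (hw : G.Reachable s w)
    (f : ℕ → ℝ) :
    f (G.dist s w + 1) + oneSideDependency G s f w =
      ∑ t : V, (numSP G s w * #(G.finsetWalkLength (G.dist s t - G.dist s w) w t) : ℝ) /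
        numSP G s t * f (G.dist s t + 1) := by
  have hσ : (numSP G s w : ℝ) ≠ 0 := by exact_mod_cast (numSP_pos hw).ne'
  have hterm : ∀ t, (numSP G s w * #(G.finsetWalkLength (G.dist s t - G.dist s w) w t) : ℝ) /
      numSP G s t * f (G.dist s t + 1) = (if w = t then f (G.dist s w + 1) else 0) +
        (numSPthrough G s t w : ℝ) / numSP G s t * f (G.dist s t + 1) := by
    intro t
    by_cases hwt : w = t
    · subst hwt
      simp [numSPthrough, card_finsetWalkLength_zero_self, hσ]
    · rw [numSPthrough_eq_numSP_mul hws hwt, if_neg hwt, zero_add]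
      push_cast
      rfl
  simp only [hterm, sum_add_distrib, sum_ite_eq, mem_univ, if_true, oneSideDependency]

end

theorem oneSideDependency_recursion_general [Fintype V] [DecidableEq V]
    (G : SimpleGraph V) [DecidableRel G.Adj]
    (s : V) (f : ℕ → ℝ) (δ : V → ℝ)
    (hδ : ∀ v : V,
      δ v = ∑ t : V, ((numSPthrough G s t v : ℝ) / (numSP G s t : ℝ))
        * f (G.dist s t + 1))
    (v : V) (hv : v ≠ s) :
    δ v = ∑ w ∈ Finset.univ.filter
        (fun w => G.Adj v w ∧ G.dist s w = G.dist s v + 1),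
      ((numSP G s v : ℝ) / (numSP G s w : ℝ)) * (f (G.dist s w + 1) + δ w) := by
  obtain rfl : δ = oneSideDependency G s f := funext hδ
  set W := univ.filter (fun w => G.Adj v w ∧ G.dist s w = G.dist s v + 1)
  have hW : ∀ w ∈ W, w ≠ s ∧ G.Reachable s w := fun w hw => by
    have hdw : G.dist s w ≠ 0 := by rw [(mem_filter.mp hw).2.2]; omega
    exact ⟨fun h => hdw (h ▸ dist_self), Reachable.of_dist_ne_zero hdw⟩
  calc oneSideDependency G s f v
      = ∑ t, ∑ w ∈ W, (numSP G s v : ℝ) / numSP G s w * ((numSP G s w *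
          #(G.finsetWalkLength (G.dist s t - G.dist s w) w t) : ℝ) / numSP G s t *
            f (G.dist s t + 1)) := by
        refine sum_congr rfl fun t _ => ?_
        rw [numSPthrough_eq_numSP_mul_sum hv, Nat.cast_mul, Nat.cast_sum, mul_sum, sum_div,
          sum_mul]
        refine sum_congr rfl fun w hw => ?_
        have hσ : (numSP G s w : ℝ) ≠ 0 := by exact_mod_cast (numSP_pos (hW w hw).2).ne'
        field_simp
    _ = _ := by
        rw [sum_comm]
        refine sum_congr rfl fun w hw => ?_
        rw [add_oneSideDependency_eq_sum (hW w hw).1 (hW w hw).2, mul_sum]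

/-- Brandes-style recursion for the generalized one-side dependency
`δ_s(v) = Σ_t (σ_st(v)/σ_st)·f(dist(s,t)+1)`: for `v ≠ s`,
`δ_s(v) = Σ_{w : v~w, dist(s,w)=dist(s,v)+1} (σ_sv/σ_sw)·(f(dist(s,w)+1) + δ_s(w))`. -/
theorem oneSideDependency_recursion [Fintype V] [DecidableEq V]
    (G : SimpleGraph V) [DecidableRel G.Adj] (hG : G.Connected)
    (s : V) (f : ℕ → ℝ) (δ : V → ℝ)
    (hδ : ∀ v : V,
      δ v = ∑ t : V, ((numSPthrough G s t v : ℝ) / (numSP G s t : ℝ))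
        * f (G.dist s t + 1))
    (v : V) (hv : v ≠ s) :
    δ v = ∑ w ∈ Finset.univ.filter
        (fun w => G.Adj v w ∧ G.dist s w = G.dist s v + 1),
      ((numSP G s v : ℝ) / (numSP G s w : ℝ)) * (f (G.dist s w + 1) + δ w) :=
  oneSideDependency_recursion_general G s f δ hδ v hv
end

section
/- Let A be a finite set. For every generalized characteristic function ν mapping ordered coalitions over A to ℝ with ν(∅) = 0, there exists a weight function w mapping ordered coalitions over A to ℝ such that for every ordered coalition T, ν(T) = Σ_{S : S ⊑ T, S ≠ ∅} w(S), where the sum ranges over all nonempty subsequences S of T. -/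
/-!
Möbius inversion on the subsequence order: the weight of `S` is forced to be `ν S` minus the
weights of the proper nonempty subsequences of `S`, a recursion on the length of `S`.
-/

open Finset

namespace List

variable {α : Type*} [DecidableEq α]

def nonemptySublists (S : List α) : Finset (List α) :=
  S.sublists.toFinset.erase []

theorem self_mem_nonemptySublists {S : List α} (hS : S ≠ []) : S ∈ S.nonemptySublists := by
  simp [nonemptySublists, hS]

theorem length_lt_of_mem_nonemptySublists_erase {S S' : List α}
    (h : S' ∈ S.nonemptySublists.erase S) : S'.length < S.length := by
  obtain ⟨hne, hmem⟩ := Finset.mem_erase.mp h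
  have hsub : S' <+ S := mem_sublists.mp (mem_toFinset.mp (Finset.mem_of_mem_erase hmem))
  exact hsub.length_le.lt_of_ne fun hlen => hne (hsub.eq_of_length hlen)

noncomputable def sublistWeight (ν : List α → ℝ) (S : List α) : ℝ :=
  ν S - ∑ S' ∈ (S.nonemptySublists.erase S).attach, sublistWeight ν S'.1
termination_by S.length
decreasing_by exact length_lt_of_mem_nonemptySublists_erase S'.2

theorem sublistWeight_eq (ν : List α → ℝ) (S : List α) :
    sublistWeight ν S = ν S - ∑ S' ∈ S.nonemptySublists.erase S, sublistWeight ν S' := by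
  rw [sublistWeight, Finset.sum_attach _ (sublistWeight ν)]

theorem sum_sublistWeight_nonemptySublists (ν : List α → ℝ) {S : List α} (hS : S ≠ []) :
    ∑ S' ∈ S.nonemptySublists, sublistWeight ν S' = ν S := by
  rw [← Finset.add_sum_erase _ _ (self_mem_nonemptySublists hS), sublistWeight_eq]
  ring

end List

theorem generalized_char_fun_has_weight_representation_general {α : Type*}
    [DecidableEq α] (ν : List α → ℝ) (hν : ν [] = 0) :
    ∃ w : List α → ℝ, ∀ T : List α, T.Nodup →
      ν T = ∑ S ∈ T.sublists.toFinset.erase [], w S := by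
  refine ⟨List.sublistWeight ν, fun T _ => ?_⟩
  rcases eq_or_ne T [] with rfl | hT
  · simp [hν]
  · exact (List.sum_sublistWeight_nonemptySublists ν hT).symm

/-- Every generalized characteristic function (on duplicate-free ordered coalitions,
with `ν(∅) = 0`) can be written as a sum of weights over nonempty subsequences:
there is `w` such that `ν(T) = Σ_{∅ ≠ S ⊑ T} w(S)` for every ordered coalition `T`. -/
theorem generalized_char_fun_has_weight_representation {α : Type*} [Fintype α]
    [DecidableEq α] (ν : List α → ℝ) (hν : ν [] = 0) :
    ∃ w : List α → ℝ, ∀ T : List α, T.Nodup →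
      ν T = ∑ S ∈ T.sublists.toFinset.erase [], w S :=
  generalized_char_fun_has_weight_representation_general ν hν
end

section
/- Let A be a finite set of players with |A| = n, let ν be a generalized characteristic function on ordered coalitions over A, and let a_i ∈ A. Then the Nowak–Radzik value of a_i, defined as the average over all orderings T of A of the marginal contribution ν((T(a_i), a_i)) − ν(T(a_i)), satisfies (1/n!) · Σ_{T ∈ Π(A)} [ν((T(a_i), a_i)) − ν(T(a_i))] = Σ_{C ⊆ A∖{a_i}} Σ_{T ∈ Π(C)} ((n − |T| − 1)!/n!) · [ν((T, a_i)) − ν(T)]. -/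
open Finset

/-!
Group the orderings `T` of the players by the prefix `L = T(i)`. The orderings with prefix `L`
are exactly `L ++ i :: r` with `r` an ordering of the `n - |L| - 1` players outside `L` and `i`,
so each prefix occurs `(n - |L| - 1)!` times, and the possible prefixes are exactly the orderings
of the subsets of `A ∖ {i}`.
-/

namespace NowakRadzik

variable {α : Type*} [DecidableEq α]

noncomputable abbrev orderings (s : Finset α) : Finset (List α) := s.toList.permutations.toFinset

theorem mem_orderings {s : Finset α} {T : List α} :
    T ∈ orderings s ↔ T.Nodup ∧ T.toFinset = s := by
  rw [List.mem_toFinset, List.mem_permutations]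
  constructor
  · intro h
    exact ⟨h.nodup_iff.2 s.nodup_toList,
      by rw [List.toFinset_eq_of_perm _ _ h, toList_toFinset]⟩
  · rintro ⟨hT, rfl⟩
    exact (List.toFinset_toList hT).symm

theorem append_mem_orderings_iff {s : Finset α} {L r : List α} (hL : L.Nodup)
    (hLs : L.toFinset ⊆ s) : L ++ r ∈ orderings s ↔ r ∈ orderings (s \ L.toFinset) := by
  simp only [mem_orderings, List.nodup_append, List.toFinset_append]
  constructor
  · rintro ⟨⟨-, hr, hdisj⟩, rfl⟩
    refine ⟨hr, ?_⟩
    rw [union_sdiff_left, sdiff_eq_self_of_disjoint]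
    exact Finset.disjoint_left.2 fun a ha haL =>
      hdisj a (List.mem_toFinset.1 haL) a (List.mem_toFinset.1 ha) rfl
  · rintro ⟨hr, hs⟩
    refine ⟨⟨hL, hr, fun a ha b hb hab => ?_⟩, by rw [hs, union_sdiff_of_subset hLs]⟩
    subst hab
    exact (mem_sdiff.1 (hs ▸ List.mem_toFinset.2 hb)).2 (List.mem_toFinset.2 ha)

theorem takeWhile_ne_eq_iff {i : α} {L T : List α} (hiL : i ∉ L) (hiT : i ∈ T) :
    T.takeWhile (fun x => decide (x ≠ i)) = L ↔ ∃ r, T = L ++ i :: r := by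
  constructor
  · induction T generalizing L with
    | nil => simp at hiT
    | cons a T ih =>
      intro hL
      by_cases hai : a = i
      · subst hai
        rw [List.takeWhile_cons_of_neg (by simp)] at hL
        exact ⟨T, by simp [← hL]⟩
      · rw [List.takeWhile_cons_of_pos (by simpa using hai)] at hL
        subst hL
        have hiT' : i ∈ T := by simpa [Ne.symm hai] using hiT
        obtain ⟨r, hr⟩ := ih (fun h => hiL (List.mem_cons_of_mem _ h)) hiT' rfl
        exact ⟨r, congrArg (a :: ·) hr⟩
  · rintro ⟨r, rfl⟩
    rw [List.takeWhile_append_of_pos fun x hx => by simpa using ne_of_mem_of_not_mem hx hiL]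
    simp

theorem card_orderings (s : Finset α) : #(orderings s) = (#s).factorial := by
  rw [List.toFinset_card_of_nodup (List.nodup_permutations _ s.nodup_toList),
    List.length_permutations, length_toList]

theorem mem_biUnion_powerset_orderings {s : Finset α} {L : List α} :
    L ∈ s.powerset.biUnion orderings ↔ L.Nodup ∧ L.toFinset ⊆ s := by
  simp only [mem_biUnion, mem_powerset, mem_orderings]
  constructor
  · rintro ⟨t, hts, hL, rfl⟩
    exact ⟨hL, hts⟩
  · rintro ⟨hL, hLs⟩
    exact ⟨_, hLs, hL, rfl⟩

theorem pairwiseDisjoint_orderings (S : Set (Finset α)) : S.PairwiseDisjoint orderings := by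
  intro s _ t _ hst
  refine Finset.disjoint_left.2 fun T hs ht => hst ?_
  rw [← (mem_orderings.1 hs).2, (mem_orderings.1 ht).2]

variable [Fintype α]

theorem filter_takeWhile_ne_eq {i : α} {L : List α} (hL : L.Nodup) (hiL : i ∉ L) :
    (orderings univ).filter (fun T => T.takeWhile (fun x => decide (x ≠ i)) = L)
      = (orderings (univ \ (L ++ [i]).toFinset)).image (L ++ [i] ++ ·) := by
  have hLi : (L ++ [i]).Nodup := by simpa using hL.concat hiL
  ext T
  simp only [mem_filter, mem_image]
  constructor
  · rintro ⟨hT, hpre⟩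
    have hiT : i ∈ T := by simp [← List.mem_toFinset, (mem_orderings.1 hT).2]
    obtain ⟨r, rfl⟩ := (takeWhile_ne_eq_iff hiL hiT).1 hpre
    exact ⟨r, (append_mem_orderings_iff hLi (subset_univ _)).1 (by simpa using hT), by simp⟩
  · rintro ⟨r, hr, rfl⟩
    exact ⟨(append_mem_orderings_iff hLi (subset_univ _)).2 hr,
      (takeWhile_ne_eq_iff hiL (by simp)).2 ⟨r, by simp⟩⟩

theorem card_filter_takeWhile_ne_eq {i : α} {L : List α} (hL : L.Nodup) (hiL : i ∉ L) :
    #((orderings univ).filter (fun T => T.takeWhile (fun x => decide (x ≠ i)) = L))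
      = (Fintype.card α - L.length - 1).factorial := by
  have hLi : (L ++ [i]).Nodup := by simpa using hL.concat hiL
  rw [filter_takeWhile_ne_eq hL hiL, card_image_of_injective _ (List.append_right_injective _),
    card_orderings, card_sdiff_of_subset (subset_univ _), List.toFinset_card_of_nodup hLi,
    card_univ, List.length_append, List.length_singleton, Nat.sub_sub]

theorem sum_orderings_univ_takeWhile_ne {M : Type*} [AddCommMonoid M] (i : α) (g : List α → M) :
    ∑ T ∈ orderings univ, g (T.takeWhile (fun x => decide (x ≠ i)))
      = ∑ C ∈ (univ.erase i).powerset, ∑ L ∈ orderings C,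
          (Fintype.card α - L.length - 1).factorial • g L := by
  rw [← sum_biUnion (pairwiseDisjoint_orderings _)]
  refine (sum_fiberwise_of_maps_to (g := fun T => T.takeWhile (fun x => decide (x ≠ i)))
    (fun T hT => ?_) _).symm.trans (sum_congr rfl fun L hL => ?_)
  · refine mem_biUnion_powerset_orderings.2
      ⟨(mem_orderings.1 hT).1.sublist (List.takeWhile_sublist _), fun x hx => ?_⟩
    simpa using List.mem_takeWhile_imp (List.mem_toFinset.1 hx)
  · obtain ⟨hL, hLs⟩ := mem_biUnion_powerset_orderings.1 hL
    have hiL : i ∉ L := fun h => by simpa using hLs (List.mem_toFinset.2 h)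
    rw [sum_congr rfl fun T hT => congrArg g (mem_filter.1 hT).2, sum_const,
      card_filter_takeWhile_ne_eq hL hiL]

end NowakRadzik

theorem nowakRadzik_two_forms_general {α : Type*} [Fintype α] [DecidableEq α]
    (ν : List α → ℝ) (i : α) :
    (1 / ((Fintype.card α).factorial : ℝ)) *
        ∑ T ∈ ((Finset.univ : Finset α).toList.permutations).toFinset,
          (ν (T.takeWhile (fun x => decide (x ≠ i)) ++ [i])
            - ν (T.takeWhile (fun x => decide (x ≠ i))))
      = ∑ C ∈ ((Finset.univ : Finset α).erase i).powerset,
          ∑ T ∈ C.toList.permutations.toFinset,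
            (((Fintype.card α - T.length - 1).factorial : ℝ) /
                ((Fintype.card α).factorial : ℝ)) * (ν (T ++ [i]) - ν T) := by
  rw [NowakRadzik.sum_orderings_univ_takeWhile_ne i fun L => ν (L ++ [i]) - ν L, mul_sum]
  refine sum_congr rfl fun C _ => ?_
  rw [mul_sum]
  refine sum_congr rfl fun T _ => ?_
  rw [nsmul_eq_mul]
  ring

/-- The two expressions for the Nowak–Radzik value of player `i` in a generalized
characteristic function game coincide: the average, over all orderings `T` of the
full player set, of the marginal contribution `ν(T(i)·i) − ν(T(i))` (where `T(i)` is
the prefix of `T` before `i`) equals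
`Σ_{C ⊆ A∖{i}} Σ_{T ∈ Π(C)} ((n−|T|−1)!/n!)·(ν(T·i) − ν(T))`. -/
theorem nowakRadzik_two_forms {α : Type*} [Fintype α] [DecidableEq α]
    (ν : List α → ℝ) (hν : ν [] = 0) (i : α) :
    (1 / ((Fintype.card α).factorial : ℝ)) *
        ∑ T ∈ ((Finset.univ : Finset α).toList.permutations).toFinset,
          (ν (T.takeWhile (fun x => decide (x ≠ i)) ++ [i])
            - ν (T.takeWhile (fun x => decide (x ≠ i))))
      = ∑ C ∈ ((Finset.univ : Finset α).erase i).powerset,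
          ∑ T ∈ C.toList.permutations.toFinset,
            (((Fintype.card α - T.length - 1).factorial : ℝ) /
                ((Fintype.card α).factorial : ℝ)) * (ν (T ++ [i]) - ν T) :=
  nowakRadzik_two_forms_general ν i
end

section
/- Let A be a finite set of players with |A| = n, let ν be a generalized characteristic function on ordered coalitions over A, and let a_i ∈ A. Then the Sánchez–Bergantiños value of a_i, defined as (1/n!) · Σ_{T ∈ Π(A)} (1/(|T(a_i)|+1)) · Σ_{l=1}^{|T(a_i)|+1} [ν((T(a_i), a_i)^l) − ν(T(a_i))], satisfies (1/n!) · Σ_{T ∈ Π(A)} (1/(|T(a_i)|+1)) · Σ_{l=1}^{|T(a_i)|+1} [ν((T(a_i), a_i)^l) − ν(T(a_i))] = Σ_{C ⊆ A∖{a_i}} Σ_{T ∈ Π(C)} ((n − |T| − 1)! / (n! · (|T|+1))) · Σ_{l=1}^{|T|+1} [ν((T, a_i)^l) − ν(T)]. -/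
/-!
Group the orderings `P` of `A` by the prefix `T = P(aᵢ)` of players before `aᵢ`. Every ordering
`T` of a subset `C ⊆ A ∖ {aᵢ}` occurs as such a prefix, and exactly for the orderings
`T ++ aᵢ :: S` with `S` an ordering of the remaining `n - |T| - 1` players, so the
average over `Π(A)` becomes the weighted sum over all `(C, T)` with weight `(n - |T| - 1)! / n!`.
-/

open Finset

namespace List

variable {α : Type*}

theorem Nodup.exists_append_perm {L U : List α} (hL : L.Nodup) (hLU : L ⊆ U) :
    ∃ S, L ++ S ~ U := by
  obtain ⟨L', hL', hL'U⟩ := hL.subperm hLU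
  obtain ⟨S, hS⟩ := hL'U.exists_perm_append
  exact ⟨S, (hS.trans (hL'.append_right S)).symm⟩

variable [DecidableEq α] {i : α}

theorem takeWhile_ne_append_cons {T : List α} (hT : i ∉ T) (S : List α) :
    (T ++ i :: S).takeWhile (fun x => decide (x ≠ i)) = T := by
  induction T with
  | nil => simp
  | cons a T ih =>
    have ha : a ≠ i := fun h => hT (h ▸ mem_cons_self)
    simp_all

theorem exists_eq_takeWhile_ne_append_cons {P : List α} (hi : i ∈ P) :
    ∃ S, P = P.takeWhile (fun x => decide (x ≠ i)) ++ i :: S := by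
  induction P with
  | nil => simp at hi
  | cons a P ih =>
    by_cases ha : a = i
    · exact ⟨P, by simp [ha]⟩
    · obtain ⟨S, hS⟩ := ih ((mem_cons.1 hi).resolve_left (Ne.symm ha))
      exact ⟨S, by rw [takeWhile_cons_of_pos (by simpa using ha), cons_append, ← hS]⟩

theorem filter_permutations_takeWhile_ne {T S U : List α} (hU : T ++ i :: S ~ U)
    (hnd : U.Nodup) :
    {P ∈ U.permutations.toFinset | P.takeWhile (fun x => decide (x ≠ i)) = T} =
      S.permutations.toFinset.map
        ⟨(T ++ i :: ·), fun _ _ h => (cons_injective (append_cancel_left h))⟩ := by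
  have hiT : i ∉ T := fun h =>
    (nodup_append.1 (hU.nodup_iff.2 hnd)).2.2 i h i mem_cons_self rfl
  ext P
  simp only [Finset.mem_filter, mem_toFinset, mem_permutations, Finset.mem_map]
  constructor
  · rintro ⟨hP, rfl⟩
    have hi : i ∈ P := hP.mem_iff.2 (hU.subset (mem_append_right _ mem_cons_self))
    obtain ⟨S', hS'⟩ := exists_eq_takeWhile_ne_append_cons hi
    refine ⟨S', ?_, hS'.symm⟩
    rw [← perm_cons i, ← perm_append_left_iff (P.takeWhile _), ← hS']
    exact hP.trans hU.symm
  · rintro ⟨S', hS', rfl⟩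
    exact ⟨(perm_append_left_iff T).2 ((perm_cons i).2 hS') |>.trans hU,
      takeWhile_ne_append_cons hiT S'⟩

theorem card_filter_permutations_takeWhile_ne {T S U : List α} (hU : T ++ i :: S ~ U)
    (hnd : U.Nodup) :
    #{P ∈ U.permutations.toFinset | P.takeWhile (fun x => decide (x ≠ i)) = T} =
      (U.length - T.length - 1).factorial := by
  have hS : S.Nodup := ((hU.nodup_iff.2 hnd).sublist (sublist_append_right T _)).of_cons
  rw [filter_permutations_takeWhile_ne hU hnd, Finset.card_map,
    toFinset_card_of_nodup (nodup_permutations S hS), length_permutations, ← hU.length_eq]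
  simp

end List

namespace Finset

variable {α : Type*} [DecidableEq α]

theorem mem_toList_permutations_toFinset {C : Finset α} {T : List α} :
    T ∈ C.toList.permutations.toFinset ↔ T.Nodup ∧ T.toFinset = C := by
  rw [List.mem_toFinset, List.mem_permutations]
  refine ⟨fun h => ⟨h.nodup_iff.2 C.nodup_toList, ?_⟩, ?_⟩
  · rw [List.toFinset_eq_of_perm _ _ h, toList_toFinset]
  · rintro ⟨hT, rfl⟩
    exact (List.toFinset_toList hT).symm

theorem pairwiseDisjoint_toList_permutations_toFinset (S : Set (Finset α)) :
    S.PairwiseDisjoint (fun C => C.toList.permutations.toFinset) := by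
  intro C₁ _ C₂ _ hne
  refine disjoint_left.2 fun T h₁ h₂ => hne ?_
  rw [mem_toList_permutations_toFinset] at h₁ h₂
  exact h₁.2.symm.trans h₂.2

theorem mem_powerset_biUnion_toList_permutations_toFinset {s : Finset α} {T : List α} :
    T ∈ s.powerset.biUnion (fun C => C.toList.permutations.toFinset) ↔
      T.Nodup ∧ T.toFinset ⊆ s := by
  simp only [mem_biUnion, mem_powerset, mem_toList_permutations_toFinset]
  constructor
  · rintro ⟨C, hC, hT, rfl⟩
    exact ⟨hT, hC⟩
  · rintro ⟨hT, hs⟩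
    exact ⟨_, hs, hT, rfl⟩

theorem sum_toList_permutations_takeWhile_ne {M : Type*} [AddCommMonoid M] {s : Finset α}
    {i : α} (hi : i ∈ s) (g : List α → M) :
    ∑ P ∈ s.toList.permutations.toFinset, g (P.takeWhile (fun x => decide (x ≠ i))) =
      ∑ C ∈ (s.erase i).powerset, ∑ T ∈ C.toList.permutations.toFinset,
        (#s - T.length - 1).factorial • g T := by
  have hprefix : ∀ P ∈ s.toList.permutations.toFinset,
      P.takeWhile (fun x => decide (x ≠ i)) ∈
        (s.erase i).powerset.biUnion (fun C => C.toList.permutations.toFinset) := by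
    intro P hP
    rw [List.mem_toFinset, List.mem_permutations] at hP
    refine mem_powerset_biUnion_toList_permutations_toFinset.2
      ⟨(hP.nodup_iff.2 s.nodup_toList).sublist (List.takeWhile_sublist _), fun x hx => ?_⟩
    rw [List.mem_toFinset] at hx
    refine mem_erase.2 ⟨by simpa using List.mem_takeWhile_imp hx, ?_⟩
    exact mem_toList.1 (hP.subset ((List.takeWhile_sublist _).subset hx))
  rw [← sum_biUnion (pairwiseDisjoint_toList_permutations_toFinset _),
    ← sum_fiberwise_of_maps_to' hprefix]
  refine sum_congr rfl fun T hT => ?_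
  obtain ⟨hT, hTs⟩ := mem_powerset_biUnion_toList_permutations_toFinset.1 hT
  have hiT : i ∉ T := fun h => by simpa using hTs (List.mem_toFinset.2 h)
  have hTi : T ++ [i] ⊆ s.toList := by
    intro x hx
    rcases List.mem_append.1 hx with hxT | hxi
    · exact mem_toList.2 (mem_of_mem_erase (hTs (List.mem_toFinset.2 hxT)))
    · exact mem_toList.2 (List.mem_singleton.1 hxi ▸ hi)
  obtain ⟨S, hS⟩ := List.Nodup.exists_append_perm (List.nodup_append.2
    ⟨hT, List.nodup_singleton i, by simpa using fun a ha (h : a = i) => hiT (h ▸ ha)⟩) hTi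
  rw [List.append_assoc, List.singleton_append] at hS
  rw [sum_const, List.card_filter_permutations_takeWhile_ne hS s.nodup_toList, length_toList]

end Finset

theorem sanchezBergantinos_two_forms_general {α : Type*} [Fintype α] [DecidableEq α]
    (ν : List α → ℝ) (i : α) :
    (1 / ((Fintype.card α).factorial : ℝ)) *
        ∑ T ∈ ((Finset.univ : Finset α).toList.permutations).toFinset,
          ((1 : ℝ) / ((T.takeWhile (fun x => decide (x ≠ i))).length + 1)) *
            ∑ l ∈ Finset.Icc 1 ((T.takeWhile (fun x => decide (x ≠ i))).length + 1),
              (ν ((T.takeWhile (fun x => decide (x ≠ i))).insertIdx (l - 1) i)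
                - ν (T.takeWhile (fun x => decide (x ≠ i))))
      = ∑ C ∈ ((Finset.univ : Finset α).erase i).powerset,
          ∑ T ∈ C.toList.permutations.toFinset,
            (((Fintype.card α - T.length - 1).factorial : ℝ) /
                (((Fintype.card α).factorial : ℝ) * ((T.length : ℝ) + 1))) *
              ∑ l ∈ Finset.Icc 1 (T.length + 1),
                (ν (T.insertIdx (l - 1) i) - ν T) := by
  rw [sum_toList_permutations_takeWhile_ne (mem_univ i) fun T => (1 : ℝ) / (T.length + 1) *
    ∑ l ∈ Icc 1 (T.length + 1), (ν (T.insertIdx (l - 1) i) - ν T), card_univ, mul_sum]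
  refine sum_congr rfl fun C _ => ?_
  rw [mul_sum]
  refine sum_congr rfl fun T _ => ?_
  rw [nsmul_eq_mul]
  field_simp

/-- The two expressions for the Sánchez–Bergantiños value of player `i` in a
generalized characteristic function game coincide: the average over all orderings
`T` of the full player set of the averaged-insertion marginal contribution
`(1/(|T(i)|+1))·Σ_{l=1}^{|T(i)|+1} (ν((T(i),i)^l) − ν(T(i)))` equals
`Σ_{C ⊆ A∖{i}} Σ_{T ∈ Π(C)} ((n−|T|−1)!/(n!·(|T|+1)))·Σ_{l=1}^{|T|+1} (ν((T,i)^l) − ν(T))`. -/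
theorem sanchezBergantinos_two_forms {α : Type*} [Fintype α] [DecidableEq α]
    (ν : List α → ℝ) (hν : ν [] = 0) (i : α) :
    (1 / ((Fintype.card α).factorial : ℝ)) *
        ∑ T ∈ ((Finset.univ : Finset α).toList.permutations).toFinset,
          ((1 : ℝ) / ((T.takeWhile (fun x => decide (x ≠ i))).length + 1)) *
            ∑ l ∈ Finset.Icc 1 ((T.takeWhile (fun x => decide (x ≠ i))).length + 1),
              (ν ((T.takeWhile (fun x => decide (x ≠ i))).insertIdx (l - 1) i)
                - ν (T.takeWhile (fun x => decide (x ≠ i))))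
      = ∑ C ∈ ((Finset.univ : Finset α).erase i).powerset,
          ∑ T ∈ C.toList.permutations.toFinset,
            (((Fintype.card α - T.length - 1).factorial : ℝ) /
                (((Fintype.card α).factorial : ℝ) * ((T.length : ℝ) + 1))) *
              ∑ l ∈ Finset.Icc 1 (T.length + 1),
                (ν (T.insertIdx (l - 1) i) - ν T) :=
  sanchezBergantinos_two_forms_general ν i
end

section
/- Let A be a finite set of players with |A| = n ≥ 1 and fix an ordering T* of all of A. Define the generalized characteristic function ν by ν(T) = 1 if T = T* and ν(T) = 0 otherwise. Then the Nowak–Radzik value of the last player of T* equals 1/n!, the Nowak–Radzik value of every other player equals 0, and the Sánchez–Bergantiños value of every player equals 1/(n! · n). -/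
/-!
For the game rewarding only the ordering `T*` of all players, `ν (T(a_i)) = 0` always, because
the predecessors of a player in an ordering of all players never exhaust `A`. So a marginal
contribution counts only when adding `a_i` to `T(a_i)` produces `T*`. Appending `a_i` does so
exactly when `T = T*` and `a_i` is last in `T*`. Inserting `a_i` at some position does so for
exactly one ordering, `T*` with `a_i` moved to the end, and one position; that term has weight
`1 / (|T(a_i)| + 1) = 1 / n`.
-/

open Finset

section Predecessors

variable {α : Type*} [DecidableEq α]

/-- `T(a_i)` in the paper's notation. -/
def predecessors (i : α) (T : List α) : List α := T.takeWhile (fun x => decide (x ≠ i))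

theorem predecessors_append_cons {i : α} {L₁ : List α} (h : i ∉ L₁) (L₂ : List α) :
    predecessors i (L₁ ++ i :: L₂) = L₁ := by
  rw [predecessors, List.takeWhile_append_of_pos
      (fun x hx => decide_eq_true (ne_of_mem_of_not_mem hx h)),
    List.takeWhile_cons_of_neg (by simp), List.append_nil]

theorem List.Nodup.exists_eq_predecessors_append_cons {i : α} {T : List α} (hT : T.Nodup)
    (hi : i ∈ T) : ∃ R, T = predecessors i T ++ i :: R := by
  obtain ⟨L₁, R, rfl⟩ := List.append_of_mem hi
  have hiL₁ : i ∉ L₁ := fun h => (List.nodup_append.1 hT).2.2 i h i List.mem_cons_self rfl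
  exact ⟨R, by rw [predecessors_append_cons hiL₁]⟩

theorem List.Nodup.insertIdx_eq_iff {i : α} {L S : List α} {k : ℕ} (hS : S.Nodup) (hi : i ∈ S)
    (hk : k ≤ L.length) : L.insertIdx k i = S ↔ L = S.erase i ∧ k = S.idxOf i := by
  constructor
  · intro h
    have hk' : k < S.length := by rw [← h, List.length_insertIdx_of_le_length hk]; omega
    have hget : S[k] = i := by subst h; exact List.getElem_insertIdx_self hk'
    refine ⟨?_, ?_⟩
    · rw [← hget, hS.erase_getElem, ← h, List.eraseIdx_insertIdx_self]
    · rw [← hget, hS.idxOf_getElem]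
  · rintro ⟨rfl, rfl⟩
    have hidx := List.idxOf_lt_length_of_mem hi
    have h := List.insertIdx_eraseIdx_getElem hidx
    rwa [← hS.erase_getElem _ hidx, List.getElem_idxOf] at h

theorem List.Nodup.sum_Icc_insertIdx_eq_ite {M : Type*} [AddCommMonoidWithOne M] {i : α}
    {S : List α} (hS : S.Nodup) (hi : i ∈ S) (L : List α) :
    ∑ l ∈ Icc 1 (L.length + 1), (if L.insertIdx (l - 1) i = S then (1 : M) else 0)
      = if L = S.erase i then 1 else 0 := by
  have hcond : ∀ l ∈ Icc 1 (L.length + 1),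
      L.insertIdx (l - 1) i = S ↔ L = S.erase i ∧ l = S.idxOf i + 1 := by
    intro l hl
    rw [Finset.mem_Icc] at hl
    rw [hS.insertIdx_eq_iff hi (by omega), Nat.sub_eq_iff_eq_add hl.1]
  split_ifs with hL
  · rw [Finset.sum_congr rfl fun l hl =>
        if_congr ((hcond l hl).trans (and_iff_right hL)) rfl rfl, Finset.sum_ite_eq', if_pos]
    have hlen : S.length = L.length + 1 := by
      rw [hL, List.length_erase_of_mem hi]
      have := List.length_pos_of_mem hi
      omega
    have hidx := List.idxOf_lt_length_of_mem hi
    rw [Finset.mem_Icc]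
    omega
  · exact Finset.sum_eq_zero fun l hl => if_neg fun h => hL ((hcond l hl).1 h).1

end Predecessors

section Orderings

variable {α : Type*} [Fintype α] [DecidableEq α]

/-- `Π(A)` in the paper's notation. -/
noncomputable def orderings (α : Type*) [Fintype α] [DecidableEq α] : Finset (List α) :=
  (univ : Finset α).toList.permutations.toFinset

theorem mem_orderings_iff_perm {T : List α} :
    T ∈ orderings α ↔ T.Perm (univ : Finset α).toList := by
  rw [orderings, List.mem_toFinset, List.mem_permutations]

theorem mem_orderings {T : List α} : T ∈ orderings α ↔ T.Nodup ∧ ∀ a, a ∈ T := by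
  rw [mem_orderings_iff_perm]
  refine ⟨fun h => ⟨h.nodup_iff.2 (nodup_toList _), fun a => h.mem_iff.2 (by simp)⟩,
    fun h => (List.perm_ext_iff_of_nodup h.1 (nodup_toList _)).2 fun a => by simp [h.2 a]⟩

theorem length_of_mem_orderings {T : List α} (hT : T ∈ orderings α) :
    T.length = Fintype.card α := by
  simpa using (mem_orderings_iff_perm.1 hT).length_eq

theorem erase_append_singleton_mem_orderings {S : List α} (hS : S ∈ orderings α) (i : α) :
    S.erase i ++ [i] ∈ orderings α :=
  mem_orderings_iff_perm.2 <| (List.perm_append_singleton _ _).trans <|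
    (List.perm_cons_erase ((mem_orderings.1 hS).2 i)).symm.trans (mem_orderings_iff_perm.1 hS)

theorem length_predecessors_add_one_le {T : List α} (hT : T ∈ orderings α) (i : α) :
    (predecessors i T).length + 1 ≤ Fintype.card α := by
  obtain ⟨hnd, hall⟩ := mem_orderings.1 hT
  obtain ⟨R, hR⟩ := hnd.exists_eq_predecessors_append_cons (hall i)
  have hlen := congrArg List.length hR
  simp only [List.length_append, List.length_cons, length_of_mem_orderings hT] at hlen
  omega

theorem eq_predecessors_append_singleton {T : List α} (hT : T ∈ orderings α) {i : α}
    (h : (predecessors i T).length + 1 = Fintype.card α) : T = predecessors i T ++ [i] := by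
  obtain ⟨hnd, hall⟩ := mem_orderings.1 hT
  obtain ⟨R, hR⟩ := hnd.exists_eq_predecessors_append_cons (hall i)
  have hlen := congrArg List.length hR
  simp only [List.length_append, List.length_cons, length_of_mem_orderings hT] at hlen
  rwa [List.length_eq_zero_iff.1 (by omega : R.length = 0)] at hR

theorem predecessors_append_singleton_eq_iff {S T : List α} (hS : S ∈ orderings α)
    (hT : T ∈ orderings α) {i : α} :
    predecessors i T ++ [i] = S ↔ T = S ∧ S.getLast? = some i := by
  constructor
  · intro h
    have hlen := congrArg List.length h
    rw [List.length_append, List.length_singleton, length_of_mem_orderings hS] at hlen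
    refine ⟨(eq_predecessors_append_singleton hT hlen).trans h, ?_⟩
    rw [← h, List.getLast?_concat]
  · rintro ⟨rfl, hlast⟩
    have hsplit := List.dropLast_append_getLast? i hlast
    have hi : i ∉ T.dropLast := fun h =>
      (List.nodup_append.1 (hsplit ▸ (mem_orderings.1 hT).1)).2.2 i h i (by simp) rfl
    conv_lhs => rw [← hsplit, predecessors_append_cons hi]
    exact hsplit

theorem predecessors_eq_erase_iff {S T : List α} (hS : S ∈ orderings α)
    (hT : T ∈ orderings α) {i : α} :
    predecessors i T = S.erase i ↔ T = S.erase i ++ [i] := by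
  obtain ⟨hSnd, hSall⟩ := mem_orderings.1 hS
  constructor
  · intro h
    have hlen : (predecessors i T).length + 1 = Fintype.card α := by
      rw [h, List.length_erase_of_mem (hSall i), ← length_of_mem_orderings hS]
      have := List.length_pos_of_mem (hSall i)
      omega
    rw [← h]
    exact eq_predecessors_append_singleton hT hlen
  · rintro rfl
    exact predecessors_append_cons hSnd.not_mem_erase []

end Orderings

section SingleOrderGame

variable {α : Type*} [Fintype α] [DecidableEq α]

noncomputable def nowakRadzikValue (ν : List α → ℝ) (i : α) : ℝ :=
  (1 / ((Fintype.card α).factorial : ℝ)) *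
    ∑ T ∈ orderings α, (ν (predecessors i T ++ [i]) - ν (predecessors i T))

/-- The inner sum runs over the `|T(a_i)| + 1` positions at which `a_i` can be inserted
into `T(a_i)`; `List.insertIdx` counts positions from `0`. -/
noncomputable def sanchezBergantinosValue (ν : List α → ℝ) (i : α) : ℝ :=
  (1 / ((Fintype.card α).factorial : ℝ)) *
    ∑ T ∈ orderings α,
      ((1 : ℝ) / ((predecessors i T).length + 1)) *
        ∑ l ∈ Icc 1 ((predecessors i T).length + 1),
          (ν ((predecessors i T).insertIdx (l - 1) i) - ν (predecessors i T))

def singleOrderGame (S T : List α) : ℝ := if T = S then 1 else 0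

theorem singleOrderGame_predecessors {S T : List α} (hS : S ∈ orderings α)
    (hT : T ∈ orderings α) (i : α) : singleOrderGame S (predecessors i T) = 0 :=
  if_neg fun h => by
    have := length_predecessors_add_one_le hT i
    rw [h, length_of_mem_orderings hS] at this
    omega

theorem nowakRadzikValue_singleOrderGame {S : List α} (hS : S ∈ orderings α) (i : α) :
    nowakRadzikValue (singleOrderGame S) i
      = if S.getLast? = some i then 1 / ((Fintype.card α).factorial : ℝ) else 0 := by
  have hsum : ∑ T ∈ orderings α, (singleOrderGame S (predecessors i T ++ [i])
      - singleOrderGame S (predecessors i T))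
      = ∑ T ∈ orderings α, if T = S then (if S.getLast? = some i then 1 else 0) else 0 := by
    refine Finset.sum_congr rfl fun T hT => ?_
    rw [singleOrderGame_predecessors hS hT, sub_zero, singleOrderGame,
      if_congr (predecessors_append_singleton_eq_iff hS hT) rfl rfl, ite_and]
  rw [nowakRadzikValue, hsum, Finset.sum_ite_eq', if_pos hS, mul_ite, mul_one, mul_zero]

theorem sanchezBergantinosValue_singleOrderGame {S : List α} (hS : S ∈ orderings α) (i : α) :
    sanchezBergantinosValue (singleOrderGame S) i
      = 1 / (((Fintype.card α).factorial : ℝ) * (Fintype.card α : ℝ)) := by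
  obtain ⟨hSnd, hSall⟩ := mem_orderings.1 hS
  have hsum : ∀ T ∈ orderings α,
      ((1 : ℝ) / ((predecessors i T).length + 1)) *
        ∑ l ∈ Icc 1 ((predecessors i T).length + 1),
          (singleOrderGame S ((predecessors i T).insertIdx (l - 1) i)
            - singleOrderGame S (predecessors i T))
      = if T = S.erase i ++ [i] then 1 / (Fintype.card α : ℝ) else 0 := by
    intro T hT
    rw [singleOrderGame_predecessors hS hT]
    simp only [sub_zero, singleOrderGame]
    rw [hSnd.sum_Icc_insertIdx_eq_ite (hSall i),
      if_congr (predecessors_eq_erase_iff hS hT) rfl rfl]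
    split_ifs with h
    · have hlen : ((predecessors i T).length : ℝ) + 1 = Fintype.card α := by
        rw [← length_of_mem_orderings hT, (predecessors_eq_erase_iff hS hT).2 h, h]
        simp
      rw [mul_one, hlen]
    · exact mul_zero _
  rw [sanchezBergantinosValue, Finset.sum_congr rfl hsum, Finset.sum_ite_eq',
    if_pos (erase_append_singleton_mem_orderings hS i), one_div_mul_one_div]

end SingleOrderGame

theorem values_of_single_order_game_general {α : Type*} [Fintype α] [DecidableEq α]
    (Tstar : List α) (hnd : Tstar.Nodup) (hall : ∀ a : α, a ∈ Tstar)
    (ν : List α → ℝ) (hν : ∀ T : List α, ν T = if T = Tstar then 1 else 0)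
    (φNR φSB : α → ℝ)
    (hNR : ∀ i : α, φNR i
      = (1 / ((Fintype.card α).factorial : ℝ)) *
          ∑ T ∈ ((Finset.univ : Finset α).toList.permutations).toFinset,
            (ν (T.takeWhile (fun x => decide (x ≠ i)) ++ [i])
              - ν (T.takeWhile (fun x => decide (x ≠ i)))))
    (hSB : ∀ i : α, φSB i
      = (1 / ((Fintype.card α).factorial : ℝ)) *
          ∑ T ∈ ((Finset.univ : Finset α).toList.permutations).toFinset,
            ((1 : ℝ) / ((T.takeWhile (fun x => decide (x ≠ i))).length + 1)) *
              ∑ l ∈ Finset.Icc 1 ((T.takeWhile (fun x => decide (x ≠ i))).length + 1),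
                (ν ((T.takeWhile (fun x => decide (x ≠ i))).insertIdx (l - 1) i)
                  - ν (T.takeWhile (fun x => decide (x ≠ i))))) :
    (∀ i : α, Tstar.getLast? = some i →
        φNR i = 1 / ((Fintype.card α).factorial : ℝ)) ∧
    (∀ i : α, Tstar.getLast? ≠ some i → φNR i = 0) ∧
    (∀ i : α, φSB i
        = 1 / (((Fintype.card α).factorial : ℝ) * (Fintype.card α : ℝ))) := by
  have hS : Tstar ∈ orderings α := mem_orderings.2 ⟨hnd, hall⟩
  obtain rfl : ν = singleOrderGame Tstar := funext hν
  have hNR' (i : α) : φNR i = nowakRadzikValue (singleOrderGame Tstar) i := hNR i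
  refine ⟨fun i hi => ?_, fun i hi => ?_, fun i => ?_⟩
  · rw [hNR', nowakRadzikValue_singleOrderGame hS, if_pos hi]
  · rw [hNR', nowakRadzikValue_singleOrderGame hS, if_neg hi]
  · exact (hSB i).trans (sanchezBergantinosValue_singleOrderGame hS i)

/-- For the generalized characteristic function that gives value `1` exactly to one
fixed ordering `T*` of all players (and `0` otherwise): the Nowak–Radzik value of the
last player of `T*` is `1/n!`, the Nowak–Radzik value of every other player is `0`,
and the Sánchez–Bergantiños value of every player is `1/(n!·n)`. -/
theorem values_of_single_order_game {α : Type*} [Fintype α] [DecidableEq α]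
    (hn : 1 ≤ Fintype.card α)
    (Tstar : List α) (hnd : Tstar.Nodup) (hall : ∀ a : α, a ∈ Tstar)
    (ν : List α → ℝ) (hν : ∀ T : List α, ν T = if T = Tstar then 1 else 0)
    (φNR φSB : α → ℝ)
    (hNR : ∀ i : α, φNR i
      = (1 / ((Fintype.card α).factorial : ℝ)) *
          ∑ T ∈ ((Finset.univ : Finset α).toList.permutations).toFinset,
            (ν (T.takeWhile (fun x => decide (x ≠ i)) ++ [i])
              - ν (T.takeWhile (fun x => decide (x ≠ i)))))
    (hSB : ∀ i : α, φSB i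
      = (1 / ((Fintype.card α).factorial : ℝ)) *
          ∑ T ∈ ((Finset.univ : Finset α).toList.permutations).toFinset,
            ((1 : ℝ) / ((T.takeWhile (fun x => decide (x ≠ i))).length + 1)) *
              ∑ l ∈ Finset.Icc 1 ((T.takeWhile (fun x => decide (x ≠ i))).length + 1),
                (ν ((T.takeWhile (fun x => decide (x ≠ i))).insertIdx (l - 1) i)
                  - ν (T.takeWhile (fun x => decide (x ≠ i))))) :
    (∀ i : α, Tstar.getLast? = some i →
        φNR i = 1 / ((Fintype.card α).factorial : ℝ)) ∧
    (∀ i : α, Tstar.getLast? ≠ some i → φNR i = 0) ∧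
    (∀ i : α, φSB i
        = 1 / (((Fintype.card α).factorial : ℝ) * (Fintype.card α : ℝ))) :=
  values_of_single_order_game_general Tstar hnd hall ν hν φNR φSB hNR hSB
end
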